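/- Let Ōɠ= id, d = d' p, n/(b^d ‚ąí 1) = n'/(b^{d'} ‚ąí 1). Then D(d, n) = D(d, n, 1) admits a filtration 0 = D_0 ‚äā D_1 ‚äā ... ‚äā D_p = D(d, n) by ŌÜ-submodules with all successive quotients D_m / D_{m‚ąí1} isomorphic to D(d', n'). -/

import Mathlib

/-!
Index the standard basis of `D(d, n)` as `e_{s d' + i}` with `s < p` and `i < d'`. For a
polynomial `P` over `k` put `f_{i,P} = ∑ₛ P(s) u^{-w(s d' + i)} e_{s d' + i}`, `w = blockWeight`.
Then `φ f_{i,P} = f_{i+1,P}` for `i + 1 < d'`, while passing to the next block shifts the argument: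
`φ f_{d'-1,P} = u^{n'} f_{0,P(X-1)}`. Hence `F_m : x ↦ ∑ᵢ xᵢ f_{i,X^m}` commutes with `φ` up to
terms `f_{0,Q}` with `Q = X^m - (X-1)^m` of degree `< m`, so `D_m = ∑_{j<m} im F_j` is `φ`-stable
and `F_m` induces `D(d', n') ≅ D_{m+1} / D_m`. The `f_{i,X^j}` with `j < p` are linearly
independent by a Vandermonde argument at the `p` distinct points `0, …, p - 1` of `k`, hence a
basis by counting dimensions.
-/

/-- The φ-semilinear operator of the φ-module `D(d, n, a)` over `K = k((u))`. -/
noncomputable def Dphi {k : Type*} [Field k]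
    (φ : LaurentSeries k →+* LaurentSeries k) (d n : ℕ) (a : k)
    (x : Fin d → LaurentSeries k) : Fin d → LaurentSeries k :=
  fun j =>
    if (j : ℕ) = 0 then
      HahnSeries.single (n : ℤ) a * φ (x ⟨d - 1, by have := j.isLt; omega⟩)
    else
      φ (x ⟨(j : ℕ) - 1, by have := j.isLt; omega⟩)

open Finset Polynomial
open HahnSeries (single)

section BlockFiltration

variable {R M N : Type*} [Ring R] [AddCommGroup M] [Module R M] [AddCommGroup N] [Module R N]
  (G : ℕ → N →ₗ[R] M)

def blockFiltration (m : ℕ) : Submodule R M :=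
  ⨆ j < m, LinearMap.range (G j)

@[simp]
lemma blockFiltration_zero : blockFiltration G 0 = ⊥ := by
  simp [blockFiltration]

lemma blockFiltration_succ (m : ℕ) :
    blockFiltration G (m + 1) = blockFiltration G m ⊔ LinearMap.range (G m) :=
  Nat.iSup_lt_succ _ m

lemma blockFiltration_le_succ (m : ℕ) : blockFiltration G m ≤ blockFiltration G (m + 1) := by
  rw [blockFiltration_succ]
  exact le_sup_left

lemma blockFiltration_mono : Monotone (blockFiltration G) :=
  monotone_nat_of_le_succ (blockFiltration_le_succ G)

lemma apply_mem_blockFiltration {j m : ℕ} (hj : j < m) (x : N) : G j x ∈ blockFiltration G m := by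
  refine blockFiltration_mono G hj ?_
  rw [blockFiltration_succ]
  exact Submodule.mem_sup_right ⟨x, rfl⟩

lemma mem_blockFiltration_iff {m : ℕ} {y : M} :
    y ∈ blockFiltration G m ↔ ∃ z : Fin m → N, ∑ j : Fin m, G j (z j) = y := by
  induction m generalizing y with
  | zero => simp [eq_comm]
  | succ m ih =>
    simp only [blockFiltration_succ, Submodule.mem_sup, ih, LinearMap.mem_range,
      Fin.sum_univ_castSucc]
    constructor
    · rintro ⟨_, ⟨z, rfl⟩, _, ⟨x, rfl⟩, rfl⟩
      exact ⟨Fin.snoc z x, by simp⟩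
    · rintro ⟨z, rfl⟩
      exact ⟨_, ⟨fun j => z j.castSucc, rfl⟩, _, ⟨z (Fin.last m), rfl⟩, rfl⟩

lemma exists_sub_mem_blockFiltration {m : ℕ} {y : M} (hy : y ∈ blockFiltration G (m + 1)) :
    ∃ x, y - G m x ∈ blockFiltration G m := by
  rw [blockFiltration_succ, Submodule.mem_sup] at hy
  obtain ⟨a, ha, _, ⟨x, rfl⟩, rfl⟩ := hy
  exact ⟨x, by simpa using ha⟩

lemma eq_zero_of_apply_mem_blockFiltration {m : ℕ}
    (hG : ∀ z : Fin (m + 1) → N, ∑ j : Fin (m + 1), G j (z j) = 0 → z = 0) {x : N}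
    (hx : G m x ∈ blockFiltration G m) : x = 0 := by
  obtain ⟨z, hz⟩ := (mem_blockFiltration_iff G).1 hx
  have := congrFun (hG (Fin.snoc (-z) x) (by simp [Fin.sum_univ_castSucc, hz])) (Fin.last m)
  simpa using this

lemma map_mem_blockFiltration {σ : R →+* R} (T : M →ₛₗ[σ] M) (T' : N → N)
    (hT : ∀ j x, G j (T' x) - T (G j x) ∈ blockFiltration G j) {m : ℕ} {y : M}
    (hy : y ∈ blockFiltration G m) : T y ∈ blockFiltration G m := by
  suffices blockFiltration G m ≤ (blockFiltration G m).comap T from this hy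
  refine iSup₂_le fun j hj => ?_
  rintro _ ⟨x, rfl⟩
  rw [Submodule.mem_comap, ← sub_sub_cancel (G j (T' x)) (T (G j x))]
  exact sub_mem (apply_mem_blockFiltration G hj _) (blockFiltration_mono G hj.le (hT j x))

lemma blockFiltration_eq_top {K M N : Type*} [DivisionRing K] [AddCommGroup M] [Module K M]
    [AddCommGroup N] [Module K N] [FiniteDimensional K M] [FiniteDimensional K N]
    {G : ℕ → N →ₗ[K] M} {p : ℕ} (hG : ∀ z : Fin p → N, ∑ j : Fin p, G j (z j) = 0 → z = 0)
    (hrank : p * Module.finrank K N = Module.finrank K M) : blockFiltration G p = ⊤ := by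
  let Φ : (Fin p → N) →ₗ[K] M := ∑ j : Fin p, (G j).comp (LinearMap.proj j)
  have hΦ : ∀ z, Φ z = ∑ j : Fin p, G j (z j) := fun z => by simp [Φ]
  have hsurj : Function.Surjective Φ := by
    refine (LinearMap.injective_iff_surjective_of_finrank_eq_finrank ?_).1 ?_
    · simp [Module.finrank_pi_fintype, hrank]
    · rw [← LinearMap.ker_eq_bot, LinearMap.ker_eq_bot']
      exact fun z hz => hG z (by rw [← hΦ, hz])
  refine eq_top_iff.2 fun y _ => ?_
  obtain ⟨z, rfl⟩ := hsurj y
  rw [hΦ]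
  exact sum_mem fun j _ => apply_mem_blockFiltration G j.isLt _

end BlockFiltration

lemma degree_X_pow_sub_comp_lt {R : Type*} [Ring R] [Nontrivial R] (m : ℕ) :
    (X ^ m - (X ^ m).comp (X - C 1) : R[X]).degree < m := by
  have hlc : ((X - C 1 : R[X]) ^ m).leadingCoeff = 1 := ((monic_X_sub_C 1).pow m).leadingCoeff
  rw [X_pow_comp, ← degree_X_pow (R := R) m]
  refine degree_sub_lt_left ?_ (monic_X_pow m).ne_zero (by rw [(monic_X_pow m).leadingCoeff, hlc])
  have hlc' : (X - C 1 : R[X]).leadingCoeff ^ m ≠ 0 := by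
    rw [(monic_X_sub_C 1).leadingCoeff, one_pow]
    exact one_ne_zero
  rw [degree_X_pow, degree_pow' hlc', degree_X_sub_C, nsmul_one]

lemma Nat.add_one_mod_of_not_dvd {v d : ℕ} (h : ¬ d ∣ v + 1) : (v + 1) % d = v % d + 1 := by
  have h1 := Nat.div_add_mod (v + 1) d
  have h2 := Nat.div_add_mod v d
  rw [Nat.succ_div_of_not_dvd h] at h1
  omega

lemma Nat.mod_eq_sub_one_of_dvd_add_one {v d : ℕ} (h : d ∣ v + 1) : v % d = d - 1 := by
  have h1 := Nat.div_add_mod (v + 1) d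
  have h2 := Nat.div_add_mod v d
  rw [Nat.succ_div_of_dvd h, Nat.mod_eq_zero_of_dvd h, mul_add] at h1
  omega

/-- With `r = n' / (b ^ d' - 1)`,
`blockWeight b d' n' (s * d' + i) = r * b ^ i * (b ^ (s * d') - 1)` is the exponent of `u⁻¹` in front of `e_{s d' + i}` in the paper's `f_{i,j}`. -/
def blockWeight (b d' n' v : ℕ) : ℤ :=
  (b : ℤ) ^ (v % d') * (n' * ∑ l ∈ range (v / d'), (b : ℤ) ^ (l * d'))

section blockWeight

variable {b d' n' : ℕ}

@[simp]
lemma blockWeight_zero : blockWeight b d' n' 0 = 0 := by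
  simp [blockWeight]

lemma blockWeight_succ_of_not_dvd {v : ℕ} (h : ¬ d' ∣ v + 1) :
    blockWeight b d' n' (v + 1) = b * blockWeight b d' n' v := by
  rw [blockWeight, blockWeight, Nat.add_one_mod_of_not_dvd h, Nat.succ_div_of_not_dvd h, pow_succ']
  ring

lemma blockWeight_succ_of_dvd {v : ℕ} (h : d' ∣ v + 1) :
    blockWeight b d' n' (v + 1) = b * blockWeight b d' n' v + n' := by
  have hd' : 0 < d' := Nat.pos_of_dvd_of_pos h v.succ_pos
  have hb : (b : ℤ) * b ^ (d' - 1) = b ^ d' := by rw [← pow_succ']; congr 1; omega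
  rw [blockWeight, blockWeight, Nat.mod_eq_zero_of_dvd h, Nat.mod_eq_sub_one_of_dvd_add_one h,
    Nat.succ_div_of_dvd h, sum_range_succ']
  simp only [add_mul, one_mul, pow_add, ← sum_mul, pow_zero, ← mul_assoc, hb]
  ring

lemma blockWeight_mul_eq {p n : ℕ} (hb : b ≠ 1) (hd' : 0 < d')
    (hr : (n : ℤ) * ((b : ℤ) ^ d' - 1) = (n' : ℤ) * ((b : ℤ) ^ (d' * p) - 1)) :
    blockWeight b d' n' (d' * p) = n := by
  have hne : (b : ℤ) ^ d' - 1 ≠ 0 := by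
    rw [sub_ne_zero, ne_eq, pow_eq_one_iff_of_nonneg (Int.natCast_nonneg b) hd'.ne']
    exact_mod_cast hb
  refine mul_right_cancel₀ hne ?_
  rw [hr, blockWeight, Nat.mul_mod_right, Nat.mul_div_cancel_left _ hd', pow_zero, one_mul,
    mul_assoc, pow_mul]
  simp only [mul_comm _ d', pow_mul, geom_sum_mul]

end blockWeight

section LaurentSeries

variable {k : Type*} [Field k]

lemma LaurentSeries.map_single_of_coeff {b : ℕ} (hb : b ≠ 0)
    {φ : LaurentSeries k → LaurentSeries k}
    (hφ1 : ∀ f m, (φ f).coeff ((b : ℤ) * m) = f.coeff m)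
    (hφ2 : ∀ f m, ¬ (b : ℤ) ∣ m → (φ f).coeff m = 0) (z : ℤ) (c : k) :
    φ (single z c) = single ((b : ℤ) * z) c := by
  ext m
  by_cases hm : (b : ℤ) ∣ m
  · obtain ⟨m, rfl⟩ := hm
    simp [hφ1, HahnSeries.coeff_single, mul_right_inj' (Int.natCast_ne_zero.2 hb)]
  · rw [hφ2 _ _ hm, HahnSeries.coeff_single_of_ne]
    rintro rfl
    exact hm ⟨z, rfl⟩

section Dphi

variable (φ : LaurentSeries k →+* LaurentSeries k) (d n : ℕ) (a : k)

noncomputable def Dphi.semilinearMap :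
    (Fin d → LaurentSeries k) →ₛₗ[φ] (Fin d → LaurentSeries k) where
  toFun := Dphi φ d n a
  map_add' x y := by
    funext j
    simp only [Dphi, Pi.add_apply, map_add]
    split_ifs <;> ring
  map_smul' c x := by
    funext j
    simp only [Dphi, Pi.smul_apply, smul_eq_mul, map_mul]
    split_ifs <;> ring

variable {φ d n a}

lemma Dphi_apply_of_val_eq_zero (x : Fin d → LaurentSeries k) (j : Fin d) (hj : (j : ℕ) = 0) :
    Dphi φ d n a x j = single (n : ℤ) a * φ (x ⟨d - 1, by have := j.isLt; omega⟩) :=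
  if_pos hj

lemma Dphi_apply_of_val_ne_zero (x : Fin d → LaurentSeries k) (j : Fin d) (hj : (j : ℕ) ≠ 0) :
    Dphi φ d n a x j = φ (x ⟨j - 1, by have := j.isLt; omega⟩) :=
  if_neg hj

lemma Dphi_apply_succ (x : Fin d → LaurentSeries k) (v : ℕ) (hv : v + 1 < d) :
    Dphi φ d n a x ⟨v + 1, hv⟩ = φ (x ⟨v, by omega⟩) :=
  if_neg v.succ_ne_zero

end Dphi

section blockMap

variable (b d' n' d : ℕ) [NeZero d']

/-- `blockMap b d' n' d (X ^ j) x = ∑ i, x i • f_{i,j}` in the paper's notation. -/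
noncomputable def blockMap (P : k[X]) :
    (Fin d' → LaurentSeries k) →ₗ[LaurentSeries k] (Fin d → LaurentSeries k) where
  toFun x v := single (-blockWeight b d' n' v) (P.eval ((v / d' : ℕ) : k)) * x (Fin.ofNat d' v)
  map_add' x y := by
    funext v
    simp [mul_add]
  map_smul' c x := by
    funext v
    simp only [Pi.smul_apply, smul_eq_mul, RingHom.id_apply]
    ring

variable {b d' n' d}

@[simp]
lemma blockMap_apply (P : k[X]) (x : Fin d' → LaurentSeries k) (v : Fin d) :
    blockMap b d' n' d P x v =
      single (-blockWeight b d' n' v) (P.eval ((v / d' : ℕ) : k)) * x (Fin.ofNat d' v) :=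
  rfl

lemma blockMap_mem_blockFiltration {P : k[X]} {m : ℕ} (hP : P.degree < m)
    (x : Fin d' → LaurentSeries k) :
    blockMap b d' n' d P x ∈ blockFiltration (fun j => blockMap b d' n' d (X ^ j)) m := by
  rcases eq_or_ne P 0 with rfl | hP0
  · have : blockMap b d' n' d 0 x = 0 := by funext v; simp
    rw [this]
    exact zero_mem _
  have hsum : blockMap b d' n' d P x =
      ∑ j : Fin m,
        blockMap b d' n' d (X ^ (j : ℕ)) ((HahnSeries.C (P.coeff j) : LaurentSeries k) • x) := by
    funext v
    have hsingle : ∀ (e : ℤ) (c : k) (y : LaurentSeries k), single e c * y =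
        single e 1 * (HahnSeries.C c * y) := fun e c y => by
      rw [← mul_assoc, HahnSeries.C_apply, HahnSeries.single_mul_single, add_zero, one_mul]
    simp only [blockMap_apply, Finset.sum_apply, Pi.smul_apply, smul_eq_mul, eval_pow, eval_X,
      eval_eq_sum_range' ((natDegree_lt_iff_degree_lt hP0).2 hP), ← Fin.sum_univ_eq_sum_range]
    rw [hsingle, map_sum, sum_mul, mul_sum]
    refine sum_congr rfl fun j _ => ?_
    conv_rhs => rw [hsingle]
    rw [map_mul]
    ring
  rw [hsum]
  exact sum_mem fun j _ => apply_mem_blockFiltration _ j.isLt _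

end blockMap

section phiModule

variable {p b d' n' d n : ℕ} [NeZero d'] {φ : LaurentSeries k →+* LaurentSeries k}

lemma Dphi_blockMap_apply_of_not_dvd (hφ : ∀ z c, φ (single z c) = single ((b : ℤ) * z) c)
    (P : k[X]) (x : Fin d' → LaurentSeries k) (v : Fin d) (hv : ¬ d' ∣ v) :
    Dphi φ d n 1 (blockMap b d' n' d P x) v = blockMap b d' n' d P (Dphi φ d' n' 1 x) v := by
  obtain ⟨_ | u, hu⟩ := v
  · exact absurd (dvd_zero d') hv
  have hv' : ¬ d' ∣ u + 1 := hv
  have hmod := Nat.add_one_mod_of_not_dvd hv'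
  rw [Dphi_apply_succ, blockMap_apply, blockMap_apply,
    Dphi_apply_of_val_ne_zero _ _ (by simp [hmod]), map_mul, hφ,
    blockWeight_succ_of_not_dvd hv', Nat.succ_div_of_not_dvd hv', mul_neg]
  congr 3
  ext
  simp [hmod]

lemma Dphi_blockMap_apply_of_dvd [CharP k p] (hφ : ∀ z c, φ (single z c) = single ((b : ℤ) * z) c)
    (hp : 0 < p) (hdt : d = d' * p) (hn : blockWeight b d' n' d = n)
    (P : k[X]) (x : Fin d' → LaurentSeries k) (v : Fin d) (hv : d' ∣ v) :
    Dphi φ d n 1 (blockMap b d' n' d P x) v =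
      single (-blockWeight b d' n' v) (P.eval (((v / d' : ℕ) : k) - 1)) * Dphi φ d' n' 1 x 0 := by
  subst hdt
  have hd' := NeZero.pos d'
  have hlast : ∀ u, d' ∣ u + 1 → Fin.ofNat d' u = ⟨d' - 1, by omega⟩ := fun u hu =>
    Fin.ext (by simp [Nat.mod_eq_sub_one_of_dvd_add_one hu])
  rw [Dphi_apply_of_val_eq_zero x 0 (by simp)]
  obtain ⟨_ | u, hu⟩ := v
  · -- `e_{d-1}` lies in the block `s = p - 1`, and `p - 1 = 0 - 1` in `k`.
    have hd : d' ∣ d' * p - 1 + 1 := by rw [Nat.sub_add_cancel (by omega)]; exact dvd_mul_right d' p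
    have hdiv : ((d' * p - 1) / d' : ℕ) = p - 1 := by
      have := Nat.succ_div_of_dvd hd
      rw [Nat.sub_add_cancel (by omega), Nat.mul_div_cancel_left _ hd'] at this
      omega
    have hw := blockWeight_succ_of_dvd (b := b) (n' := n') hd
    rw [Nat.sub_add_cancel (by omega), hn] at hw
    rw [Dphi_apply_of_val_eq_zero _ _ rfl, blockMap_apply, map_mul, hφ, hlast _ hd, hdiv,
      Nat.cast_sub hp, CharP.cast_eq_zero k p, Nat.cast_one]
    simp only [Nat.zero_div, Nat.cast_zero, blockWeight_zero, neg_zero]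
    rw [← mul_assoc, ← mul_assoc, HahnSeries.single_mul_single, HahnSeries.single_mul_single]
    congr 2
    · congr 1
      linarith
    · ring
  · have hv' : d' ∣ u + 1 := hv
    rw [Dphi_apply_succ, blockMap_apply, map_mul, hφ,
      hlast _ hv', blockWeight_succ_of_dvd hv', Nat.succ_div_of_dvd hv', ← mul_assoc,
      HahnSeries.single_mul_single, Nat.cast_succ, add_sub_cancel_right, mul_one]
    congr 2
    rw [neg_add, neg_add_cancel_right, mul_neg]

lemma blockMap_Dphi_sub_Dphi_blockMap [CharP k p]
    (hφ : ∀ z c, φ (single z c) = single ((b : ℤ) * z) c)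
    (hp : 0 < p) (hdt : d = d' * p) (hn : blockWeight b d' n' d = n)
    (P : k[X]) (x : Fin d' → LaurentSeries k) :
    blockMap b d' n' d P (Dphi φ d' n' 1 x) - Dphi φ d n 1 (blockMap b d' n' d P x) =
      blockMap b d' n' d (P - P.comp (X - C 1)) (Pi.single 0 (Dphi φ d' n' 1 x 0)) := by
  funext v
  rw [Pi.sub_apply, blockMap_apply, blockMap_apply]
  by_cases hv : d' ∣ v
  · have h0 : Fin.ofNat d' v = 0 := Fin.ext (by simp [Nat.mod_eq_zero_of_dvd hv])
    rw [Dphi_blockMap_apply_of_dvd hφ hp hdt hn P x v hv, h0, Pi.single_eq_same, ← sub_mul,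
      ← HahnSeries.single_sub]
    simp
  · have h0 : Fin.ofNat d' v ≠ 0 := fun h =>
      hv (Nat.dvd_of_mod_eq_zero (by simpa using congrArg Fin.val h))
    rw [Dphi_blockMap_apply_of_not_dvd hφ P x v hv, blockMap_apply, sub_self,
      Pi.single_eq_of_ne h0, mul_zero]

lemma eq_zero_of_sum_blockMap_X_pow_eq_zero [CharP k p] (hdt : d = d' * p) {q : ℕ} (hq : q ≤ p)
    (z : Fin q → Fin d' → LaurentSeries k)
    (hz : ∑ j : Fin q, blockMap b d' n' d (X ^ (j : ℕ)) (z j) = 0) : z = 0 := by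
  funext j i
  suffices (fun j => z j i) = 0 from congrFun this j
  refine Matrix.eq_zero_of_forall_index_sum_mul_pow_eq_zero
    (f := fun s : Fin q => HahnSeries.C ((s : ℕ) : k)) ?_ fun s => ?_
  · intro s t hst
    exact Fin.ext (CharP.natCast_injOn_Iio k p (by simp; omega) (by simp; omega)
      (HahnSeries.C_injective hst))
  · have hv : s * d' + i < d := by
      rw [hdt]
      nlinarith [s.isLt, i.isLt]
    have hdiv : (s * d' + i) / d' = s := by
      rw [Nat.add_comm, Nat.add_mul_div_right _ _ (NeZero.pos d'), Nat.div_eq_of_lt i.isLt,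
        zero_add]
    have hmod : Fin.ofNat d' (s * d' + i) = i :=
      Fin.ext (by simp [Nat.add_mod, Nat.mod_eq_of_lt i.isLt])
    have hcoord := congrFun hz ⟨s * d' + i, hv⟩
    simp only [Finset.sum_apply, blockMap_apply, eval_pow, eval_X, hdiv, hmod,
      Pi.zero_apply] at hcoord
    have hsingle : ∀ (e : ℤ) (c : ℕ), single e (((s : ℕ) : k) ^ c) =
        single e 1 * HahnSeries.C ((s : ℕ) : k) ^ c := by
      intro e c
      rw [← map_pow, HahnSeries.C_apply, HahnSeries.single_mul_single, add_zero, one_mul]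
    simp only [hsingle, mul_assoc, ← mul_sum] at hcoord
    simpa only [mul_comm] using
      (mul_eq_zero.1 hcoord).resolve_left (HahnSeries.single_ne_zero one_ne_zero)

end phiModule

end LaurentSeries

theorem stmt9_general (p : ℕ)
    (k : Type*) [Field k] [CharP k p] (b : ℕ) (hb : 1 < b)
    (φ : LaurentSeries k →+* LaurentSeries k)
    (hφ1 : ∀ (f : LaurentSeries k) (m : ℤ), (φ f).coeff ((b : ℤ) * m) = f.coeff m)
    (hφ2 : ∀ (f : LaurentSeries k) (m : ℤ), ¬ ((b : ℤ) ∣ m) → (φ f).coeff m = 0)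
    (d d' : ℕ) (hd' : 0 < d') (hdt : d = d' * p) (hd : 0 < d)
    (n n' : ℕ)
    (hr : (n : ℤ) * ((b : ℤ) ^ d' - 1) = (n' : ℤ) * ((b : ℤ) ^ d - 1)) :
    ∃ D : ℕ → Submodule (LaurentSeries k) (Fin d → LaurentSeries k),
      D 0 = ⊥ ∧ D p = ⊤ ∧
      (∀ m, D m ≤ D (m + 1)) ∧
      (∀ m, ∀ x ∈ D m, Dphi φ d n 1 x ∈ D m) ∧
      (∀ m < p,
        ∃ F : (Fin d' → LaurentSeries k) →ₗ[LaurentSeries k]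
            (Fin d → LaurentSeries k),
          (∀ x, F x ∈ D (m + 1)) ∧
          (∀ x, F (Dphi φ d' n' 1 x) - Dphi φ d n 1 (F x) ∈ D m) ∧
          (∀ x, F x ∈ D m → x = 0) ∧
          (∀ y ∈ D (m + 1), ∃ x, y - F x ∈ D m)) := by
  have : NeZero d' := ⟨hd'.ne'⟩
  have hp : 0 < p := Nat.pos_of_mul_pos_left (hdt ▸ hd)
  have hφ := LaurentSeries.map_single_of_coeff (by omega) hφ1 hφ2
  have hn : blockWeight b d' n' d = n := hdt ▸ blockWeight_mul_eq hb.ne' hd' (hdt ▸ hr)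
  set G := fun j => blockMap b d' n' d (X ^ j : k[X])
  have hcomm : ∀ j x, G j (Dphi φ d' n' 1 x) - Dphi φ d n 1 (G j x) ∈ blockFiltration G j :=
    fun j x => by
      rw [blockMap_Dphi_sub_Dphi_blockMap hφ hp hdt hn]
      exact blockMap_mem_blockFiltration (degree_X_pow_sub_comp_lt j) _
  have hindep : ∀ q ≤ p, ∀ z : Fin q → Fin d' → LaurentSeries k,
      ∑ j : Fin q, G j (z j) = 0 → z = 0 :=
    fun q hq => eq_zero_of_sum_blockMap_X_pow_eq_zero hdt hq
  refine ⟨blockFiltration G, blockFiltration_zero G,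
    blockFiltration_eq_top (hindep p le_rfl) (by simp [hdt, mul_comm]), blockFiltration_le_succ G,
    fun m x hx => map_mem_blockFiltration G (Dphi.semilinearMap φ d n 1) (Dphi φ d' n' 1) hcomm hx,
    fun m hm => ⟨G m, apply_mem_blockFiltration G m.lt_succ_self, hcomm m,
      fun x hx => eq_zero_of_apply_mem_blockFiltration G (hindep (m + 1) hm) hx,
      fun y hy => exists_sub_mem_blockFiltration G hy⟩⟩

/-- With `σ = id`, `char k = p`, `d = d' p` and `n/(b^d-1) = n'/(b^{d'}-1)`, the
φ-module `D(d,n) = D(d,n,1)` admits an increasing filtration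
`0 = D_0 ⊂ D_1 ⊂ ⋯ ⊂ D_p = D(d,n)` by φ-stable submodules whose successive quotients
`D_m / D_{m-1}` are all isomorphic to `D(d',n')`.  (The isomorphism of the quotient
with `D(d',n')` is expressed by a linear map `F : D(d',n') → D_m` which is injective
and surjective modulo `D_{m-1}` and commutes with φ modulo `D_{m-1}`.) -/
theorem stmt9 (p : ℕ) [Fact p.Prime]
    (k : Type*) [Field k] [IsAlgClosed k] [CharP k p] (b : ℕ) (hb : 1 < b)
    (φ : LaurentSeries k →+* LaurentSeries k)
    (hφ1 : ∀ (f : LaurentSeries k) (m : ℤ), (φ f).coeff ((b : ℤ) * m) = f.coeff m)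
    (hφ2 : ∀ (f : LaurentSeries k) (m : ℤ), ¬ ((b : ℤ) ∣ m) → (φ f).coeff m = 0)
    (d d' : ℕ) (hd' : 0 < d') (hdt : d = d' * p) (hd : 0 < d)
    (n n' : ℕ)
    (hr : (n : ℤ) * ((b : ℤ) ^ d' - 1) = (n' : ℤ) * ((b : ℤ) ^ d - 1)) :
    ∃ D : ℕ → Submodule (LaurentSeries k) (Fin d → LaurentSeries k),
      D 0 = ⊥ ∧ D p = ⊤ ∧
      (∀ m, D m ≤ D (m + 1)) ∧
      (∀ m, ∀ x ∈ D m, Dphi φ d n 1 x ∈ D m) ∧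
      (∀ m < p,
        ∃ F : (Fin d' → LaurentSeries k) →ₗ[LaurentSeries k]
            (Fin d → LaurentSeries k),
          (∀ x, F x ∈ D (m + 1)) ∧
          (∀ x, F (Dphi φ d' n' 1 x) - Dphi φ d n 1 (F x) ∈ D m) ∧
          (∀ x, F x ∈ D m → x = 0) ∧
          (∀ y ∈ D (m + 1), ∃ x, y - F x ∈ D m)) :=
  stmt9_general p k b hb φ hφ1 hφ2 d d' hd' hdt hd n n' hr
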